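/- Fix n ≥ 2 and p ∈ (0,1). Let G⃗(n,p) be the random digraph on [n] in which each ordered pair (i,j) with i ≠ j is an edge independently with probability p, and let Y be the number of permutations π ∈ 𝔖_n such that (π_i, π_{i+1}) is an edge for every i ∈ [n-1]. Then 𝔼[Y²] ≤ exp(1/p − 1) · (𝔼[Y])²; more precisely, 𝔼[Y²] = (𝔼[Y])² · 𝔼[p^{−Z}], where Z = |E(π) ∩ E(σ)| for two independent uniformly random permutations π, σ of [n] and E(π) = {(π_i, π_{i+1}) : 1 ≤ i ≤ n−1}, and 𝔼[p^{−Z}] ≤ exp(1/p − 1). -/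

import Mathlib

/-!
Write `Y = ∑_π 1[E(π) ⊆ G]`. By independence of the edges, `𝔼[Y] = n! p^{n-1}` and
`𝔼[Y²] = ∑_{π,σ} p^{|E(π) ∪ E(σ)|} = p^{2(n-1)} ∑_{π,σ} p^{-|E(π) ∩ E(σ)|}`.

For the bound, put `q = 1/p - 1` and expand `p^{-Z} = (1 + q)^Z = ∑_{T ⊆ E(π) ∩ E(σ)} q^{|T|}`.
After exchanging the sums, each `T ⊆ E(π)` is weighted by the number of `σ` with `T ⊆ E(σ)`,
which is at most `(n - |T|)!`: deleting from the one-line notation of `σ` the head of the edge of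
`T` whose head comes last is injective, and leaves an ordering of `n - 1` vertices containing the
other `|T| - 1` edges of `T`. Hence
`∑_σ p^{-Z} ≤ ∑_j C(n-1, j) (n-j)! q^j ≤ n! ∑_j q^j/j! ≤ n! e^q`.
-/

open MeasureTheory

/-- Directed edges on vertex set `Fin n`: ordered pairs of distinct vertices. -/
abbrev DEdge (n : ℕ) := {e : Fin n × Fin n // e.1 ≠ e.2}

/-- The `i`-th consecutive directed edge `(π_i, π_{i+1})` (for `1 ≤ i ≤ n-1`) traced out by a
permutation `π` of `Fin n` in one-line notation. -/
def pathEdge (n : ℕ) (π : Equiv.Perm (Fin n)) (i : Fin (n - 1)) : DEdge n :=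
  ⟨(π ⟨i.1, by have := i.isLt; omega⟩, π ⟨i.1 + 1, by have := i.isLt; omega⟩), by
    intro h
    have h3 : i.1 = i.1 + 1 := congrArg Fin.val (π.injective h)
    omega⟩

/-- The random digraph `G⃗(n,p)`: the product Bernoulli(`p`) measure on assignments of
presence/absence to each of the `n(n−1)` possible directed edges on `[n]`. -/
noncomputable def digraphMeasure (n : ℕ) (p : ENNReal) (hp : p ≤ 1) :
    Measure (DEdge n → Bool) :=
  Measure.pi (fun _ => (PMF.bernoulli p.toNNReal
    (by simpa using ENNReal.toNNReal_mono ENNReal.one_ne_top hp)).toMeasure)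

/-- `hamY n ω` is the number of Hamiltonian paths of the digraph `ω`: permutations
`π ∈ 𝔖_n` all of whose consecutive pairs `(π_i, π_{i+1})`, `1 ≤ i ≤ n−1`, are edges. -/
noncomputable def hamY (n : ℕ) (ω : DEdge n → Bool) : ℕ :=
  (Finset.univ.filter (fun π : Equiv.Perm (Fin n) =>
    ∀ i : Fin (n - 1), ω (pathEdge n π i) = true)).card

/-- The set `E(π) = {(π_i, π_{i+1}) : 1 ≤ i ≤ n−1}` of consecutive directed edges of a
permutation `π` of `Fin n` in one-line notation. -/
def edgeFinset (n : ℕ) (π : Equiv.Perm (Fin n)) : Finset (Fin n × Fin n) :=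
  Finset.image (fun i : Fin (n - 1) =>
    (π ⟨i.1, by have := i.isLt; omega⟩, π ⟨i.1 + 1, by have := i.isLt; omega⟩)) Finset.univ

open Finset Nat

namespace List

variable {α : Type*}

theorem pair_infix_iff {a b : α} {l : List α} :
    [a, b] <:+: l ↔ ∃ u v, l = u ++ a :: b :: v := by
  constructor <;> rintro ⟨u, v, h⟩ <;> exact ⟨u, v, by simpa using h.symm⟩

theorem pair_infix_iff_getElem {a b : α} {l : List α} :
    [a, b] <:+: l ↔ ∃ i, ∃ h : i + 1 < l.length, l[i] = a ∧ l[i + 1] = b := by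
  rw [infix_iff_getElem?]
  constructor
  · rintro ⟨k, -, h⟩
    obtain ⟨_, h₀⟩ := getElem?_eq_some_iff.1 (h 0 (by simp))
    obtain ⟨hk, h₁⟩ := getElem?_eq_some_iff.1 (h 1 (by simp))
    exact ⟨k, by omega, by simpa using h₀, by simpa [add_comm] using h₁⟩
  · rintro ⟨i, hi, rfl, rfl⟩
    refine ⟨i, by simp; omega, fun j hj => ?_⟩
    simp only [length_cons, length_nil] at hj
    interval_cases j <;> simp [add_comm]

theorem nodup_append_cons_cons {a b : α} {u v : List α} :
    (u ++ a :: b :: v).Nodup ↔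
      (a ∉ u ∧ a ≠ b ∧ a ∉ v) ∧ (b ∉ u ∧ b ∉ v) ∧ (u ++ v).Nodup := by
  simp only [nodup_middle, nodup_cons, mem_append, mem_cons, not_or]

variable [DecidableEq α]

theorem IsInfix.erase {l₁ l : List α} {b : α} (h : l₁ <:+: l) (hb : b ∉ l₁) :
    l₁ <:+: l.erase b := by
  obtain ⟨s, t, rfl⟩ := h
  by_cases hs : b ∈ s
  · rw [erase_append, if_pos (mem_append_left _ hs), erase_append, if_pos hs]
    exact ⟨s.erase b, t, rfl⟩
  · rw [erase_append_right _ (by simp [hs, hb])]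
    exact ⟨s, t.erase b, rfl⟩

theorem Nodup.idxOf_snd_of_pair_infix {a b : α} {l : List α} (hl : l.Nodup)
    (h : [a, b] <:+: l) : l.idxOf b = l.idxOf a + 1 := by
  obtain ⟨u, v, rfl⟩ := pair_infix_iff.1 h
  obtain ⟨⟨hau, hab, -⟩, ⟨hbu, -⟩, -⟩ := nodup_append_cons_cons.1 hl
  simp [idxOf_append_of_notMem hau, idxOf_append_of_notMem hbu, idxOf_cons_ne _ hab]

theorem Nodup.eq_of_erase_eq_of_pair_infix {a b : α} {l₁ l₂ : List α} (h₁ : l₁.Nodup)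
    (h₂ : l₂.Nodup) (ha₁ : [a, b] <:+: l₁) (ha₂ : [a, b] <:+: l₂)
    (he : l₁.erase b = l₂.erase b) : l₁ = l₂ := by
  obtain ⟨u₁, v₁, rfl⟩ := pair_infix_iff.1 ha₁
  obtain ⟨u₂, v₂, rfl⟩ := pair_infix_iff.1 ha₂
  obtain ⟨⟨hau₁, hab, hav₁⟩, ⟨hbu₁, -⟩, -⟩ := nodup_append_cons_cons.1 h₁
  obtain ⟨⟨hau₂, -, -⟩, ⟨hbu₂, -⟩, -⟩ := nodup_append_cons_cons.1 h₂
  simp only [erase_append_right _ hbu₁, erase_append_right _ hbu₂, erase_cons, hab,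
    beq_iff_eq, if_false, if_true] at he
  obtain ⟨rfl, -, rfl⟩ := (append_cons_inj_of_notMem hau₁ hav₁).1 he
  rfl

theorem Nodup.exists_mem_forall_mem_erase_ne_snd {l : List α} (hl : l.Nodup)
    {S : Finset (α × α)} (hS : ∀ e ∈ S, [e.1, e.2] <:+: l) (hne : S.Nonempty) :
    ∃ e₀ ∈ S, ∀ e ∈ S.erase e₀, e.1 ≠ e₀.2 ∧ e.2 ≠ e₀.2 := by
  -- take the pair whose second entry comes last in `l`
  obtain ⟨e₀, he₀, hmax⟩ := S.exists_max_image (fun e => l.idxOf e.2) hne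
  refine ⟨e₀, he₀, fun e he => ⟨fun h₁ => ?_, fun h₂ => ?_⟩⟩ <;>
    have hidx := hl.idxOf_snd_of_pair_infix (hS e (Finset.mem_of_mem_erase he))
  · have := hmax e (Finset.mem_of_mem_erase he)
    rw [h₁] at hidx
    omega
  · have h₀ := hl.idxOf_snd_of_pair_infix (hS e₀ he₀)
    rw [h₂] at hidx
    have h₁ : e.1 = e₀.1 :=
      (idxOf_inj ((hS e (Finset.mem_of_mem_erase he)).subset (by simp))).1 (by omega)
    exact Finset.ne_of_mem_erase he (Prod.ext h₁ h₂)

theorem card_filter_pair_infix_le {l₀ : List α} (h₀ : l₀.Nodup) {S : Finset (α × α)}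
    (hS : ∀ e ∈ S, [e.1, e.2] <:+: l₀) :
    #{l ∈ l₀.permutations.toFinset | ∀ e ∈ S, [e.1, e.2] <:+: l} ≤
      (l₀.length - #S)! := by
  induction hk : #S generalizing l₀ S with
  | zero =>
    calc _ ≤ #l₀.permutations.toFinset := card_filter_le _ _
      _ = (l₀.length - 0)! := by
        rw [toFinset_card_of_nodup (nodup_permutations _ h₀), length_permutations, Nat.sub_zero]
  | succ k ih =>
    obtain ⟨⟨a, b⟩, hab, hsep⟩ :=
      h₀.exists_mem_forall_mem_erase_ne_snd hS (card_pos.1 (by omega))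
    have hb : b ∈ l₀ := (hS _ hab).subset (by simp)
    have erase_infix {l : List α} (hl : ∀ e ∈ S, [e.1, e.2] <:+: l) :
        ∀ e ∈ S.erase (a, b), [e.1, e.2] <:+: l.erase b := fun e he =>
      (hl e (Finset.mem_of_mem_erase he)).erase
        (by simp [(hsep e he).1.symm, (hsep e he).2.symm])
    calc _ ≤ #{l ∈ (l₀.erase b).permutations.toFinset |
              ∀ e ∈ S.erase (a, b), [e.1, e.2] <:+: l} := by
          refine card_le_card_of_injOn (·.erase b) (fun l hl => ?_)
            fun l₁ hl₁ l₂ hl₂ he => ?_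
          · simp only [coe_filter, mem_toFinset, mem_permutations] at hl ⊢
            exact ⟨hl.1.erase b, erase_infix hl.2⟩
          · simp only [coe_filter, mem_toFinset, mem_permutations] at hl₁ hl₂
            exact (hl₁.1.nodup_iff.2 h₀).eq_of_erase_eq_of_pair_infix (hl₂.1.nodup_iff.2 h₀)
              (hl₁.2 _ hab) (hl₂.2 _ hab) he
      _ ≤ ((l₀.erase b).length - k)! :=
          ih (h₀.erase b) (erase_infix hS) (by rw [card_erase_of_mem hab, hk]; rfl)
      _ = (l₀.length - (k + 1))! := by rw [length_erase_of_mem hb, Nat.sub_sub, add_comm]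

end List

section Permutations

variable {n : ℕ}

theorem mem_edgeFinset_iff_pair_infix {σ : Equiv.Perm (Fin n)} {x y : Fin n} :
    (x, y) ∈ edgeFinset n σ ↔ [x, y] <:+: List.ofFn σ := by
  simp only [edgeFinset, mem_image, mem_univ, true_and, Prod.mk.injEq,
    List.pair_infix_iff_getElem, List.length_ofFn, List.getElem_ofFn]
  constructor
  · rintro ⟨i, hx, hy⟩
    exact ⟨i, by omega, hx, hy⟩
  · rintro ⟨i, hi, hx, hy⟩
    exact ⟨⟨i, by omega⟩, hx, hy⟩

theorem Equiv.Perm.ofFn_perm_ofFn (σ τ : Equiv.Perm (Fin n)) :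
    (List.ofFn σ).Perm (List.ofFn τ) := by
  rw [List.ofFn_eq_map, List.ofFn_eq_map]
  exact σ.map_finRange_perm.trans τ.map_finRange_perm.symm

theorem card_filter_subset_edgeFinset_le (T : Finset (Fin n × Fin n)) :
    #{σ : Equiv.Perm (Fin n) | T ⊆ edgeFinset n σ} ≤ (n - #T)! := by
  obtain h | ⟨σ₀, hσ₀⟩ :=
    ({σ | T ⊆ edgeFinset n σ} : Finset (Equiv.Perm (Fin n))).eq_empty_or_nonempty
  · simp [h]
  have infix_of_subset {σ : Equiv.Perm (Fin n)} (hσ : T ⊆ edgeFinset n σ) :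
      ∀ e ∈ T, [e.1, e.2] <:+: List.ofFn σ := fun e he =>
    mem_edgeFinset_iff_pair_infix.1 (hσ he)
  have key := List.card_filter_pair_infix_le (List.nodup_ofFn.2 σ₀.injective)
    (infix_of_subset (mem_filter.1 hσ₀).2)
  rw [List.length_ofFn] at key
  refine (card_le_card_of_injOn (fun σ : Equiv.Perm (Fin n) => List.ofFn ⇑σ)
    (fun σ hσ => ?_) ?_).trans key
  · simp only [coe_filter, mem_univ, true_and] at hσ
    simp only [coe_filter, List.mem_toFinset, List.mem_permutations]
    exact ⟨σ.ofFn_perm_ofFn σ₀, infix_of_subset hσ⟩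
  · exact fun σ₁ _ σ₂ _ h => Equiv.coe_fn_injective (List.ofFn_injective h)

end Permutations

section Expectations

variable {Ω ι : Type*} [Fintype ι] {P : ι → Ω → Prop} [∀ i ω, Decidable (P i ω)]

theorem card_filter_eq_sum_indicator (ω : Ω) :
    (#{i | P i ω} : ℝ) = ∑ i, {ω | P i ω}.indicator 1 ω := by
  rw [card_filter]
  push_cast
  exact sum_congr rfl fun i _ => by simp [Set.indicator_apply]

theorem card_filter_sq (ω : Ω) :
    #{i | P i ω} ^ 2 = #{x : ι × ι | P x.1 ω ∧ P x.2 ω} := by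
  rw [sq, ← card_product, ← filter_product, univ_product_univ]

variable [MeasurableSpace Ω] {μ : Measure Ω} [IsFiniteMeasure μ]

theorem integral_card_filter (hP : ∀ i, MeasurableSet {ω | P i ω}) :
    ∫ ω, (#{i | P i ω} : ℝ) ∂μ = ∑ i, μ.real {ω | P i ω} := by
  simp_rw [card_filter_eq_sum_indicator]
  rw [integral_finsetSum _ fun i _ => (integrable_const 1).indicator (hP i)]
  simp_rw [integral_indicator_one (hP _)]

theorem integral_card_filter_sq (hP : ∀ i, MeasurableSet {ω | P i ω}) :
    ∫ ω, (#{i | P i ω} : ℝ) ^ 2 ∂μ = ∑ i, ∑ j, μ.real {ω | P i ω ∧ P j ω} := by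
  have hPP (x : ι × ι) : MeasurableSet {ω | P x.1 ω ∧ P x.2 ω} := (hP x.1).inter (hP x.2)
  simp_rw [← Nat.cast_pow, card_filter_sq]
  rw [integral_card_filter hPP, Fintype.sum_prod_type]

end Expectations

theorem MeasureTheory.Measure.pi_setOf_forall_eq_true {ι : Type*} [Fintype ι] (ν : Measure Bool)
    [IsProbabilityMeasure ν] (F : Finset ι) :
    Measure.pi (fun _ : ι => ν) {ω | ∀ i ∈ F, ω i = true} = ν {true} ^ #F := by
  have : {ω : ι → Bool | ∀ i ∈ F, ω i = true} = (F : Set ι).pi fun _ => {true} := by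
    ext; simp
  rw [this, Measure.pi_pi_finset, prod_const]

section RandomDigraph

variable {n : ℕ}

instance (p : ENNReal) (hp : p ≤ 1) : IsProbabilityMeasure (digraphMeasure n p hp) := by
  unfold digraphMeasure
  infer_instance

theorem digraphMeasure_real_setOf_forall_eq_true {p : ℝ} (hp : 0 ≤ p)
    (hp1 : ENNReal.ofReal p ≤ 1) (F : Finset (DEdge n)) :
    (digraphMeasure n (ENNReal.ofReal p) hp1).real {ω | ∀ e ∈ F, ω e = true} = p ^ #F := by
  rw [measureReal_def, digraphMeasure, Measure.pi_setOf_forall_eq_true, ENNReal.toReal_pow,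
    PMF.toMeasure_apply_singleton _ _ (measurableSet_singleton _)]
  change ((ENNReal.ofReal p).toNNReal : ENNReal).toReal ^ #F = p ^ #F
  simp [hp]

def pathEdges (n : ℕ) (π : Equiv.Perm (Fin n)) : Finset (DEdge n) :=
  univ.image (pathEdge n π)

theorem pathEdge_injective (π : Equiv.Perm (Fin n)) : Function.Injective (pathEdge n π) := by
  intro i j h
  have := π.injective (congrArg (fun e : DEdge n => e.1.1) h)
  exact Fin.ext (by simpa using congrArg Fin.val this)

theorem card_pathEdges (π : Equiv.Perm (Fin n)) : #(pathEdges n π) = n - 1 := by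
  rw [pathEdges, Finset.card_image_of_injective _ (pathEdge_injective π), Finset.card_univ,
    Fintype.card_fin]

theorem image_val_pathEdges (π : Equiv.Perm (Fin n)) :
    (pathEdges n π).image Subtype.val = edgeFinset n π := by
  rw [pathEdges, image_image]
  rfl

theorem card_edgeFinset (π : Equiv.Perm (Fin n)) : #(edgeFinset n π) = n - 1 := by
  rw [← image_val_pathEdges, Finset.card_image_of_injective _ Subtype.val_injective,
    card_pathEdges]

theorem card_pathEdges_inter (π σ : Equiv.Perm (Fin n)) :
    #(pathEdges n π ∩ pathEdges n σ) = #(edgeFinset n π ∩ edgeFinset n σ) := by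
  rw [← image_val_pathEdges, ← image_val_pathEdges, ← image_inter _ _ Subtype.val_injective,
    Finset.card_image_of_injective _ Subtype.val_injective]

theorem pow_card_pathEdges_union {p : ℝ} (hp : p ≠ 0) (π σ : Equiv.Perm (Fin n)) :
    p ^ #(pathEdges n π ∪ pathEdges n σ) =
      p ^ (2 * (n - 1)) * p ^ (-(#(edgeFinset n π ∩ edgeFinset n σ) : ℤ)) := by
  have h : #(pathEdges n π ∪ pathEdges n σ) + #(edgeFinset n π ∩ edgeFinset n σ) =
      2 * (n - 1) := by
    rw [← card_pathEdges_inter, card_union_add_card_inter, card_pathEdges, card_pathEdges,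
      two_mul]
  rw [zpow_neg, zpow_natCast, ← h, pow_add, mul_inv_cancel_right₀ (pow_ne_zero _ hp)]

theorem forall_pathEdge_eq_true_iff (π : Equiv.Perm (Fin n)) (ω : DEdge n → Bool) :
    (∀ i, ω (pathEdge n π i) = true) ↔ ∀ e ∈ pathEdges n π, ω e = true := by
  simp [pathEdges]

variable {p : ℝ} {hp1 : ENNReal.ofReal p ≤ 1}

theorem integral_hamY (hp : 0 ≤ p) :
    ∫ ω, (hamY n ω : ℝ) ∂digraphMeasure n (ENNReal.ofReal p) hp1 = n ! * p ^ (n - 1) := by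
  unfold hamY
  rw [integral_card_filter fun _ => .of_discrete]
  simp_rw [forall_pathEdge_eq_true_iff, digraphMeasure_real_setOf_forall_eq_true hp, card_pathEdges]
  rw [sum_const, Finset.card_univ, Fintype.card_perm, Fintype.card_fin, nsmul_eq_mul]

theorem integral_hamY_sq (hp : 0 ≤ p) :
    ∫ ω, (hamY n ω : ℝ) ^ 2 ∂digraphMeasure n (ENNReal.ofReal p) hp1 =
      ∑ π : Equiv.Perm (Fin n), ∑ σ : Equiv.Perm (Fin n),
        p ^ #(pathEdges n π ∪ pathEdges n σ) := by
  unfold hamY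
  rw [integral_card_filter_sq fun _ => .of_discrete]
  simp_rw [forall_pathEdge_eq_true_iff, ← forall_mem_union,
    digraphMeasure_real_setOf_forall_eq_true hp]

theorem integral_hamY_sq_eq_mul (hp : 0 < p) :
    ∫ ω, (hamY n ω : ℝ) ^ 2 ∂digraphMeasure n (ENNReal.ofReal p) hp1 =
      (∫ ω, (hamY n ω : ℝ) ∂digraphMeasure n (ENNReal.ofReal p) hp1) ^ 2 *
        ((∑ π : Equiv.Perm (Fin n), ∑ σ : Equiv.Perm (Fin n),
            p ^ (-(#(edgeFinset n π ∩ edgeFinset n σ) : ℤ))) / (n ! * n !)) := by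
  rw [integral_hamY_sq hp.le, integral_hamY hp.le]
  simp_rw [pow_card_pathEdges_union hp.ne', ← mul_sum]
  field_simp
  ring

end RandomDigraph

section SecondMomentBound

variable {n : ℕ}

theorem zpow_neg_card_eq_sum_powerset {K α : Type*} [Field K] (p : K) (s : Finset α) :
    p ^ (-(#s : ℤ)) = ∑ t ∈ s.powerset, (1 / p - 1) ^ #t := by
  have h := sum_pow_mul_eq_add_pow (1 / p - 1) 1 s
  simp only [one_pow, mul_one, sub_add_cancel] at h
  rw [h, zpow_neg, zpow_natCast, one_div, inv_pow]

theorem Nat.choose_pred_mul_factorial_mul_factorial_le {n j : ℕ} (hj : j ≤ n) :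
    (n - 1).choose j * j ! * (n - j)! ≤ n ! := by
  calc (n - 1).choose j * j ! * (n - j)! ≤ n.choose j * j ! * (n - j)! := by
        gcongr
        omega
    _ = n ! := choose_mul_factorial_mul_factorial hj

theorem sum_zpow_neg_card_edgeFinset_inter_eq (p : ℝ) (π : Equiv.Perm (Fin n)) :
    ∑ σ : Equiv.Perm (Fin n), p ^ (-(#(edgeFinset n π ∩ edgeFinset n σ) : ℤ)) =
      ∑ T ∈ (edgeFinset n π).powerset, #{σ | T ⊆ edgeFinset n σ} * (1 / p - 1) ^ #T := by
  simp_rw [zpow_neg_card_eq_sum_powerset]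
  rw [sum_comm' (t' := (edgeFinset n π).powerset) (s' := fun T => {σ | T ⊆ edgeFinset n σ})
    (by simp only [mem_univ, true_and, mem_filter, mem_powerset, subset_inter_iff, and_comm,
      implies_true])]
  simp only [sum_const, nsmul_eq_mul]

theorem sum_zpow_neg_card_edgeFinset_inter_le {p : ℝ} (hp0 : 0 < p) (hp1 : p ≤ 1)
    (π : Equiv.Perm (Fin n)) :
    ∑ σ : Equiv.Perm (Fin n), p ^ (-(#(edgeFinset n π ∩ edgeFinset n σ) : ℤ)) ≤
      n ! * Real.exp (1 / p - 1) := by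
  set q := 1 / p - 1
  have hq : 0 ≤ q := sub_nonneg.2 (one_le_one_div hp0 hp1)
  calc ∑ σ, p ^ (-(#(edgeFinset n π ∩ edgeFinset n σ) : ℤ))
      = ∑ T ∈ (edgeFinset n π).powerset, #{σ | T ⊆ edgeFinset n σ} * q ^ #T :=
        sum_zpow_neg_card_edgeFinset_inter_eq p π
    _ ≤ ∑ T ∈ (edgeFinset n π).powerset, (n - #T)! * q ^ #T := by
        gcongr
        exact_mod_cast card_filter_subset_edgeFinset_le _
    _ = ∑ j ∈ range (n - 1 + 1), ((n - 1).choose j * (n - j)! : ℕ) * q ^ j := by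
        rw [sum_powerset_apply_card (fun j => ((n - j)! : ℝ) * q ^ j), card_edgeFinset]
        simp [nsmul_eq_mul, mul_assoc]
    _ ≤ ∑ j ∈ range (n - 1 + 1), n ! * (q ^ j / j !) := by
        refine sum_le_sum fun j hj => ?_
        have hjn : j ≤ n := by
          rw [mem_range] at hj
          omega
        have hfac : ((n - 1).choose j * j ! * (n - j)! : ℝ) ≤ n ! := by
          exact_mod_cast choose_pred_mul_factorial_mul_factorial_le hjn
        rw [mul_div_assoc', le_div_iff₀ (by positivity)]
        push_cast
        nlinarith [pow_nonneg hq j]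
    _ ≤ n ! * Real.exp q := by
        rw [← mul_sum]
        gcongr
        exact Real.sum_le_exp_of_nonneg hq _

theorem sum_sum_zpow_neg_card_edgeFinset_inter_div_le {p : ℝ} (hp0 : 0 < p) (hp1 : p ≤ 1) :
    (∑ π : Equiv.Perm (Fin n), ∑ σ : Equiv.Perm (Fin n),
        p ^ (-(#(edgeFinset n π ∩ edgeFinset n σ) : ℤ))) / (n ! * n !) ≤
      Real.exp (1 / p - 1) := by
  rw [div_le_iff₀ (by positivity)]
  calc _ ≤ ∑ _π : Equiv.Perm (Fin n), n ! * Real.exp (1 / p - 1) :=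
        sum_le_sum fun π _ => sum_zpow_neg_card_edgeFinset_inter_le hp0 hp1 π
    _ = _ := by
        rw [sum_const, Finset.card_univ, Fintype.card_perm, Fintype.card_fin, nsmul_eq_mul]
        ring

end SecondMomentBound

theorem stmt19_general (n : ℕ) (p : ℝ) (hp0 : 0 < p) (hp1 : p < 1) :
    (∫ ω, ((hamY n ω : ℝ)) ^ 2
        ∂(digraphMeasure n (ENNReal.ofReal p) (ENNReal.ofReal_le_one.mpr hp1.le)) =
      (∫ ω, (hamY n ω : ℝ)
        ∂(digraphMeasure n (ENNReal.ofReal p) (ENNReal.ofReal_le_one.mpr hp1.le))) ^ 2 *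
      ((∑ π : Equiv.Perm (Fin n), ∑ σ : Equiv.Perm (Fin n),
          p ^ (-((edgeFinset n π ∩ edgeFinset n σ).card : ℤ))) /
        ((n.factorial : ℝ) * (n.factorial : ℝ)))) ∧
    ((∑ π : Equiv.Perm (Fin n), ∑ σ : Equiv.Perm (Fin n),
        p ^ (-((edgeFinset n π ∩ edgeFinset n σ).card : ℤ))) /
      ((n.factorial : ℝ) * (n.factorial : ℝ)) ≤ Real.exp (1 / p - 1)) ∧
    (∫ ω, ((hamY n ω : ℝ)) ^ 2
        ∂(digraphMeasure n (ENNReal.ofReal p) (ENNReal.ofReal_le_one.mpr hp1.le)) ≤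
      Real.exp (1 / p - 1) *
        (∫ ω, (hamY n ω : ℝ)
          ∂(digraphMeasure n (ENNReal.ofReal p) (ENNReal.ofReal_le_one.mpr hp1.le))) ^ 2) := by
  have hbound := sum_sum_zpow_neg_card_edgeFinset_inter_div_le (n := n) hp0 hp1.le
  refine ⟨integral_hamY_sq_eq_mul hp0, hbound, ?_⟩
  rw [integral_hamY_sq_eq_mul hp0, mul_comm (Real.exp _)]
  exact mul_le_mul_of_nonneg_left hbound (sq_nonneg _)

/-- second moment. Fix `n ≥ 2` and `p ∈ (0,1)`, and let `Y` be the number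
of Hamiltonian paths of `G⃗(n,p)`. Then `𝔼[Y²] = (𝔼[Y])² · 𝔼[p^{−Z}]`, where
`Z = |E(π) ∩ E(σ)|` for independent uniform permutations `π, σ` of `[n]`, and
`𝔼[p^{−Z}] ≤ exp(1/p − 1)`; hence `𝔼[Y²] ≤ exp(1/p − 1)·(𝔼[Y])²`. -/
theorem stmt19 (n : ℕ) (hn : 2 ≤ n) (p : ℝ) (hp0 : 0 < p) (hp1 : p < 1) :
    (∫ ω, ((hamY n ω : ℝ)) ^ 2
        ∂(digraphMeasure n (ENNReal.ofReal p) (ENNReal.ofReal_le_one.mpr hp1.le)) =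
      (∫ ω, (hamY n ω : ℝ)
        ∂(digraphMeasure n (ENNReal.ofReal p) (ENNReal.ofReal_le_one.mpr hp1.le))) ^ 2 *
      ((∑ π : Equiv.Perm (Fin n), ∑ σ : Equiv.Perm (Fin n),
          p ^ (-((edgeFinset n π ∩ edgeFinset n σ).card : ℤ))) /
        ((n.factorial : ℝ) * (n.factorial : ℝ)))) ∧
    ((∑ π : Equiv.Perm (Fin n), ∑ σ : Equiv.Perm (Fin n),
        p ^ (-((edgeFinset n π ∩ edgeFinset n σ).card : ℤ))) /
      ((n.factorial : ℝ) * (n.factorial : ℝ)) ≤ Real.exp (1 / p - 1)) ∧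
    (∫ ω, ((hamY n ω : ℝ)) ^ 2
        ∂(digraphMeasure n (ENNReal.ofReal p) (ENNReal.ofReal_le_one.mpr hp1.le)) ≤
      Real.exp (1 / p - 1) *
        (∫ ω, (hamY n ω : ℝ)
          ∂(digraphMeasure n (ENNReal.ofReal p) (ENNReal.ofReal_le_one.mpr hp1.le))) ^ 2) :=
  stmt19_general n p hp0 hp1
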